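/- Let G be a DAG with evaluation semantics f_U, let Z ⊆ V with fixed conditioning values A_Z, and suppose U_0, U_1, U_2 is a sequence of exogenous-term assignments such that: f_{U_0} and f_{U_2} both agree with A_Z on Z; U_1 differs from U_0 only on unblocked ancestors of u given Z; U_2 differs from U_1 only on unblocked ancestors (given Z) of nodes z ∈ Z that have an unblocked ancestor on which U_0 and U_1 differ; and f_{U_0}(v) ≠ f_{U_2}(v) for some v ∉ Z with v ≠ u. Then u and v are d-connected given Z in G. -/

import Mathlib

section CausalDefs

variable {V : Type}

/-- The edge relation has no directed cycles. -/
def AcyclicRel (E : V → V → Prop) : Prop := ∀ v, ¬ Relation.TransGen E v v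

/-- `b` is a mediator on the (undirected) path `l`. -/
def Mediator (E : V → V → Prop) (l : List V) (b : V) : Prop :=
  ∃ a c, [a, b, c] <:+: l ∧ ((E a b ∧ E b c) ∨ (E b a ∧ E c b))

/-- `b` is a confounder on the (undirected) path `l`. -/
def Confounder (E : V → V → Prop) (l : List V) (b : V) : Prop :=
  ∃ a c, [a, b, c] <:+: l ∧ E b a ∧ E b c

/-- `b` is a collider on the (undirected) path `l`. -/
def Collider (E : V → V → Prop) (l : List V) (b : V) : Prop :=
  ∃ a c, [a, b, c] <:+: l ∧ E a b ∧ E c b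

/-- An acyclic undirected path: consecutive nodes joined by an edge in some
direction, no repeated nodes. -/
def UPath (E : V → V → Prop) (l : List V) : Prop :=
  l.Chain' (fun a b => E a b ∨ E b a) ∧ l.Nodup

/-- An acyclic undirected path from `u` to `v` (with at least one edge). -/
def UPathFrom (E : V → V → Prop) (u v : V) (l : List V) : Prop :=
  UPath E l ∧ l.head? = some u ∧ l.getLast? = some v ∧ 2 ≤ l.length

/-- A directed walk from `u` to `v` (nodes may repeat). -/
def DirWalkFrom (E : V → V → Prop) (u v : V) (l : List V) : Prop :=
  l.Chain' E ∧ l.head? = some u ∧ l.getLast? = some v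

/-- An acyclic directed path from `u` to `v`. -/
def DirPathFrom (E : V → V → Prop) (u v : V) (l : List V) : Prop :=
  l.Chain' E ∧ l.Nodup ∧ l.head? = some u ∧ l.getLast? = some v

/-- `d` is a descendant of `b` (every node is its own descendant). -/
def Descendant (E : V → V → Prop) (b d : V) : Prop := Relation.ReflTransGen E b d

/-- The path `l` is d-connected given `Z`: no mediator or confounder on `l` is
in `Z`, and every collider on `l` has a descendant in `Z`. -/
def DConnPath (E : V → V → Prop) (Z : Set V) (l : List V) : Prop :=
  (∀ b, Mediator E l b → b ∉ Z) ∧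
  (∀ b, Confounder E l b → b ∉ Z) ∧
  (∀ b, Collider E l b → ∃ d ∈ Z, Descendant E b d)

/-- `u` and `v` are d-connected given `Z`. -/
def DConnected (E : V → V → Prop) (Z : Set V) (u v : V) : Prop :=
  ∃ l, UPathFrom E u v l ∧ DConnPath E Z l

/-- `u` and `v` are d-separated given `Z`: every acyclic undirected path from
`u` to `v` is blocked. -/
def DSeparated (E : V → V → Prop) (Z : Set V) (u v : V) : Prop :=
  ∀ l, UPathFrom E u v l →
    (∃ b ∈ Z, Mediator E l b ∨ Confounder E l b) ∨
    (∃ b, Collider E l b ∧ ¬ ∃ d ∈ Z, Descendant E b d)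

/-- `w` is an unblocked ancestor of `u` given `Z`: `w = u`, or there is a
directed path from `w` to `u` on which neither `w` nor any internal node
lies in `Z`. -/
def UnblockedAnc (E : V → V → Prop) (Z : Set V) (w u : V) : Prop :=
  w = u ∨ ∃ l : List V, l.Chain' E ∧ l.head? = some w ∧ l.getLast? = some u ∧
    ∀ x ∈ l.dropLast, x ∉ Z

/-- `x` is a source on the path `l`: an endpoint whose adjacent path edge
points away from it, or an (internal) confounder. -/
def SourceOn (E : V → V → Prop) (l : List V) (x : V) : Prop :=
  (∃ b, [x, b] <+: l ∧ E x b) ∨ (∃ b, [b, x] <:+ l ∧ E x b) ∨ Confounder E l x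

end CausalDefs

/-!
Tracing the change of `v` back along parents yields an exogenous change at some `a` and a
directed path `a → ⋯ → v` on which `f U0` and `f U2` differ, so it avoids `Z`. If `U0 a ≠ U1 a`,
then `a` is an unblocked ancestor of `u` and the trek `u ← ⋯ ← a → ⋯ → v` is d-connecting.
Otherwise `U1 a ≠ U2 a`, so `a` and some `b` with `U0 b ≠ U1 b` are unblocked ancestors of a common
`z ∈ Z`, and `u ← ⋯ ← b → ⋯ → z ← ⋯ ← a → ⋯ → v` is d-connecting with the collider `z ∈ Z`.

These are walks; a d-connecting walk shortens to a d-connecting path by cutting out a loop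
`x ⋯ x`. The only new triple is centred at `x`; if it is a collider, then either `x` already was
one, or both loop edges leave `x` and the loop contains a collider descending from `x`.
-/

namespace List

variable {α : Type*} {a b c x : α} {l₁ l₂ : List α}

theorem infix_append_tail_of_suffix_of_prefix (h₁ : [a, b] <:+ l₁) (h₂ : [b, c] <+: l₂) :
    [a, b, c] <:+: l₁ ++ l₂.tail := by
  obtain ⟨s, rfl⟩ := h₁
  obtain ⟨t, rfl⟩ := h₂
  exact ⟨s, t, by simp⟩

theorem triple_infix_append_tail (h₁ : l₁.getLast? = some x) (h₂ : l₂.head? = some x)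
    (h : [a, b, c] <:+: l₁ ++ l₂.tail) :
    [a, b, c] <:+: l₁ ∨ [a, b, c] <:+: l₂ ∨ (b = x ∧ [a, x] <:+ l₁ ∧ [x, c] <+: l₂) := by
  obtain ⟨p, rfl⟩ := getLast?_eq_some_iff.mp h₁
  obtain ⟨q, rfl⟩ := head?_eq_some_iff.mp h₂
  obtain ⟨s, t, hst⟩ := h
  rw [append_assoc, tail_cons, append_assoc, singleton_append, append_eq_append_iff] at hst
  rcases hst with ⟨r, rfl, hr⟩ | ⟨r, rfl, hr⟩
  · rcases r with _ | ⟨a', _ | ⟨b', _ | ⟨c', r⟩⟩⟩ <;> simp at hr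
    · exact .inr (.inl ⟨[], t, by simp [hr]⟩)
    · obtain ⟨rfl, rfl, rfl, rfl⟩ := hr
      exact .inr (.inr ⟨rfl, ⟨s, by simp⟩, ⟨t, rfl⟩⟩)
    · obtain ⟨rfl, rfl, rfl, rfl⟩ := hr
      exact .inl ⟨s, [], by simp⟩
    · obtain ⟨rfl, rfl, rfl, rfl⟩ := hr
      exact .inl ⟨s, r ++ [x], by simp⟩
  · exact .inr (.inl ⟨r, t, by simp [hr]⟩)

theorem IsChain.rel_of_infix {R : α → α → Prop} {l : List α} (hl : l.IsChain R)
    (h : [a, b] <:+: l) : R a b :=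
  isChain_pair.mp (hl.infix h)

theorem exists_eq_append_cons_append_cons_of_not_nodup {l : List α} (h : ¬ l.Nodup) :
    ∃ p x m s, l = p ++ x :: (m ++ x :: s) := by
  obtain ⟨x, hx⟩ := by simpa [nodup_iff_sublist] using h
  obtain ⟨r₁, r₂, rfl, h₁, h₂⟩ := cons_sublist_iff.mp hx
  obtain ⟨p, m₁, rfl⟩ := append_of_mem h₁
  obtain ⟨m₂, s, rfl⟩ := append_of_mem (singleton_sublist.mp h₂)
  exact ⟨p, x, m₁ ++ m₂, s, by simp⟩

end List

section Walks

variable {V : Type} {E : V → V → Prop} {Z : Set V}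

theorem AcyclicRel.asymm (hE : AcyclicRel E) {a b : V} (hab : E a b) (hba : E b a) : False :=
  hE a (.head hab (.single hba))

theorem AcyclicRel.irrefl (hE : AcyclicRel E) {a : V} (haa : E a a) : False :=
  hE a (.single haa)

theorem AcyclicRel.wellFounded [Finite V] (hE : AcyclicRel E) : WellFounded E :=
  haveI : Std.Irrefl (Relation.TransGen E) := ⟨hE⟩
  Subrelation.wf Relation.TransGen.single
    (Finite.wellFounded_of_trans_of_irrefl (Relation.TransGen E))

def UnblockedEdge (E : V → V → Prop) (Z : Set V) (x y : V) : Prop := E x y ∧ x ∉ Z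

def OpenAt (E : V → V → Prop) (Z : Set V) (α β γ : V) : Prop :=
  (E α β ∧ E γ β → ∃ d ∈ Z, Descendant E β d) ∧ (E β α ∨ E β γ → β ∉ Z)

def OpenWalk (E : V → V → Prop) (Z : Set V) (l : List V) : Prop :=
  l.IsChain (fun a b => E a b ∨ E b a) ∧ ∀ α β γ, [α, β, γ] <:+: l → OpenAt E Z α β γ

def OpenWalkFrom (E : V → V → Prop) (Z : Set V) (u v : V) (l : List V) : Prop :=
  OpenWalk E Z l ∧ l.head? = some u ∧ l.getLast? = some v

theorem OpenAt.symm {α β γ : V} (h : OpenAt E Z α β γ) : OpenAt E Z γ β α :=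
  ⟨fun hc => h.1 hc.symm, fun ho => h.2 ho.symm⟩

theorem openAt_of_rel_right (hE : AcyclicRel E) {α β γ : V} (hβγ : E β γ) (hβ : β ∉ Z) :
    OpenAt E Z α β γ :=
  ⟨fun hc => (hE.asymm hβγ hc.2).elim, fun _ => hβ⟩

theorem openAt_of_rel_left (hE : AcyclicRel E) {α β γ : V} (hβα : E β α) (hβ : β ∉ Z) :
    OpenAt E Z α β γ :=
  (openAt_of_rel_right hE hβα hβ).symm

theorem openAt_of_collider (hE : AcyclicRel E) {α β γ : V} (hαβ : E α β) (hγβ : E γ β)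
    (hβ : β ∈ Z) : OpenAt E Z α β γ :=
  ⟨fun _ => ⟨β, hβ, .refl⟩, fun ho => (ho.elim (hE.asymm hαβ) (hE.asymm hγβ)).elim⟩

theorem dConnPath_of_openWalk {l : List V} (h : OpenWalk E Z l) : DConnPath E Z l :=
  ⟨fun _ ⟨_, _, ht, hm⟩ => (h.2 _ _ _ ht).2 (hm.elim (fun hm => .inr hm.2) (fun hm => .inl hm.1)),
    fun _ ⟨_, _, ht, hα, _⟩ => (h.2 _ _ _ ht).2 (.inl hα),
    fun _ ⟨_, _, ht, hα, hγ⟩ => (h.2 _ _ _ ht).1 ⟨hα, hγ⟩⟩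

theorem OpenWalk.infix {l l' : List V} (h : OpenWalk E Z l) (h' : l' <:+: l) : OpenWalk E Z l' :=
  ⟨h.1.infix h', fun α β γ ht => h.2 α β γ (ht.trans h')⟩

theorem OpenWalk.reverse {l : List V} (h : OpenWalk E Z l) : OpenWalk E Z l.reverse :=
  ⟨List.isChain_reverse.mpr (h.1.imp fun _ _ => Or.symm),
    fun α β γ ht => (h.2 γ β α (by simpa using List.reverse_infix.mpr ht)).symm⟩

theorem openWalk_of_isChain (hE : AcyclicRel E) {l : List V} (h : l.IsChain (UnblockedEdge E Z)) :
    OpenWalk E Z l :=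
  ⟨h.imp fun _ _ he => .inl he.1, fun _ β γ ht =>
    have hβγ : UnblockedEdge E Z β γ :=
      h.rel_of_infix ((List.infix_cons (List.infix_refl _)).trans ht)
    openAt_of_rel_right hE hβγ.1 hβγ.2⟩

theorem OpenWalkFrom.append_tail {u v x : V} {l₁ l₂ : List V} (h₁ : OpenWalkFrom E Z u x l₁)
    (h₂ : OpenWalkFrom E Z x v l₂)
    (hx : ∀ α γ, [α, x] <:+ l₁ → [x, γ] <+: l₂ → OpenAt E Z α x γ) :
    OpenWalkFrom E Z u v (l₁ ++ l₂.tail) := by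
  obtain ⟨⟨hc₁, ht₁⟩, hu, hx₁⟩ := h₁
  obtain ⟨⟨hc₂, ht₂⟩, hx₂, hv⟩ := h₂
  obtain ⟨p, rfl⟩ := List.getLast?_eq_some_iff.mp hx₁
  obtain ⟨q, rfl⟩ := List.head?_eq_some_iff.mp hx₂
  refine ⟨⟨?_, fun α β γ ht => ?_⟩, by simpa using hu, by simpa using hv⟩
  · simpa using hc₁.append_overlap hc₂ (List.cons_ne_nil x [])
  · rcases List.triple_infix_append_tail hx₁ hx₂ ht with ht | ht | ⟨rfl, hα, hγ⟩
    exacts [ht₁ α β γ ht, ht₂ α β γ ht, hx α γ hα hγ]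

theorem OpenWalkFrom.of_dirWalkFrom (hE : AcyclicRel E) {u v : V} {l : List V}
    (h : DirWalkFrom (UnblockedEdge E Z) u v l) : OpenWalkFrom E Z u v l :=
  ⟨openWalk_of_isChain hE h.1, h.2⟩

theorem OpenWalkFrom.reverse {u v : V} {l : List V} (h : OpenWalkFrom E Z u v l) :
    OpenWalkFrom E Z v u l.reverse :=
  ⟨h.1.reverse, by simpa using h.2.2, by simpa using h.2.1⟩

theorem OpenWalkFrom.append_tail_of_dirWalkFrom (hE : AcyclicRel E) {u v x : V} {l d : List V}
    (h : OpenWalkFrom E Z u x l) (hd : DirWalkFrom (UnblockedEdge E Z) x v d) :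
    OpenWalkFrom E Z u v (l ++ d.tail) :=
  h.append_tail (.of_dirWalkFrom hE hd) fun _ _ _ hγ =>
    have hxγ : UnblockedEdge E Z _ _ := List.IsChain.rel_of_infix hd.1 hγ.isInfix
    openAt_of_rel_right hE hxγ.1 hxγ.2

theorem OpenWalkFrom.reverse_append_tail_of_dirWalkFrom (hE : AcyclicRel E) {u v x : V}
    {l d : List V} (hd : DirWalkFrom (UnblockedEdge E Z) x u d) (h : OpenWalkFrom E Z x v l) :
    OpenWalkFrom E Z u v (d.reverse ++ l.tail) :=
  (OpenWalkFrom.of_dirWalkFrom hE hd).reverse.append_tail h fun α _ hα _ =>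
    have hxα : UnblockedEdge E Z x α := List.IsChain.rel_of_infix hd.1
      (List.reverse_suffix.mp (by simpa using hα : [x, α].reverse <:+ d.reverse)).isInfix
    openAt_of_rel_left hE hxα.1 hxα.2

theorem OpenWalkFrom.of_collider (hE : AcyclicRel E) {a b z : V} {d₁ d₂ : List V}
    (h₁ : DirWalkFrom (UnblockedEdge E Z) a z d₁) (h₂ : DirWalkFrom (UnblockedEdge E Z) b z d₂)
    (hz : z ∈ Z) : OpenWalkFrom E Z a b (d₁ ++ d₂.reverse.tail) :=
  (OpenWalkFrom.of_dirWalkFrom hE h₁).append_tail (OpenWalkFrom.of_dirWalkFrom hE h₂).reverse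
    fun _ γ hα hγ =>
      openAt_of_collider hE (List.IsChain.rel_of_infix h₁.1 hα.isInfix).1
        (List.IsChain.rel_of_infix h₂.1
          (List.reverse_prefix.mp (by simpa using hγ : [γ, z].reverse <+: d₂.reverse)).isInfix).1 hz

theorem exists_collider_of_isChain (hE : AcyclicRel E) {x y a b : V} {t : List V}
    (hc : (x :: y :: t).IsChain (fun a b => E a b ∨ E b a)) (hxy : E x y)
    (hab : [a, b] <:+ x :: y :: t) (hba : E b a) :
    ∃ α β γ, [α, β, γ] <:+: x :: y :: t ∧ E α β ∧ E γ β ∧ Relation.ReflTransGen E x β := by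
  induction t generalizing x y with
  | nil =>
    obtain ⟨rfl, rfl⟩ : a = x ∧ b = y := by simpa using hab.eq_of_length rfl
    exact (hE.asymm hxy hba).elim
  | cons w t ih =>
    have hc' := (List.isChain_cons_cons.mp hc).2
    rcases (List.isChain_cons_cons.mp hc').1 with hyw | hwy
    · have hab' : [a, b] <:+ y :: w :: t :=
        (List.suffix_cons_iff.mp hab).resolve_left fun h => by simpa using congrArg List.length h
      obtain ⟨α, β, γ, ht, hαβ, hγβ, hyβ⟩ := ih hc' hyw hab'
      exact ⟨α, β, γ, ht.trans (List.suffix_cons _ _).isInfix, hαβ, hγβ, .head hxy hyβ⟩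
    · exact ⟨x, y, w, List.IsPrefix.isInfix ⟨t, rfl⟩, hxy, hwy, .single hxy⟩

theorem OpenWalk.exists_descendant_of_rel (hE : AcyclicRel E) {x y a b : V} {t : List V}
    (h : OpenWalk E Z (x :: y :: t)) (hxy : E x y) (hab : [a, b] <:+ x :: y :: t)
    (hba : E b a) : ∃ d ∈ Z, Descendant E x d := by
  obtain ⟨α, β, γ, ht, hαβ, hγβ, hxβ⟩ := exists_collider_of_isChain hE h.1 hxy hab hba
  obtain ⟨d, hd, hβd⟩ := (h.2 α β γ ht).1 ⟨hαβ, hγβ⟩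
  exact ⟨d, hd, hxβ.trans hβd⟩

theorem OpenAt.splice {α γ x y₁ y₂ : V} (h₁ : OpenAt E Z α x y₁) (h₂ : OpenAt E Z y₂ x γ)
    (hy₁ : E x y₁ ∨ E y₁ x) (hy₂ : E y₂ x ∨ E x y₂)
    (hloop : E x y₁ → E x y₂ → ∃ d ∈ Z, Descendant E x d) : OpenAt E Z α x γ := by
  refine ⟨fun ⟨hα, hγ⟩ => ?_, fun ho => ho.elim (fun h => h₁.2 (.inl h)) (fun h => h₂.2 (.inr h))⟩
  rcases hy₁ with hy₁ | hy₁
  · rcases hy₂ with hy₂ | hy₂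
    · exact h₂.1 ⟨hy₂, hγ⟩
    · exact hloop hy₁ hy₂
  · exact h₁.1 ⟨hα, hy₁⟩

theorem OpenWalkFrom.shortcut (hE : AcyclicRel E) {u v x : V} {p m s : List V}
    (h : OpenWalkFrom E Z u v (p ++ x :: (m ++ x :: s))) : OpenWalkFrom E Z u v (p ++ x :: s) := by
  have hloop : OpenWalk E Z (x :: (m ++ [x])) := h.1.infix ⟨p, s, by simp⟩
  obtain ⟨y₁, m₁, hm₁⟩ := List.exists_cons_of_ne_nil fun hm : m = [] =>
    hE.irrefl ((hloop.1.rel_of_infix (show [x, x] <:+: x :: (m ++ [x]) by simp [hm])).elim id id)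
  obtain ⟨m₂, y₂, hm₂⟩ := (List.eq_nil_or_concat m).resolve_left (by simp [hm₁])
  have hpx : OpenWalkFrom E Z u x (p ++ [x]) :=
    ⟨h.1.infix ⟨[], m ++ x :: s, by simp⟩, by simpa using h.2.1, by simp⟩
  have hxs : OpenWalkFrom E Z x v (x :: s) := by
    refine ⟨h.1.infix ⟨p ++ x :: m, [], by simp⟩, rfl, ?_⟩
    rw [← h.2.2, show p ++ x :: (m ++ x :: s) = (p ++ x :: m) ++ x :: s by simp,
      List.getLast?_append_of_ne_nil _ (List.cons_ne_nil _ _)]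
  have hy₁ : [x, y₁] <+: x :: (m ++ [x]) := ⟨m₁ ++ [x], by simp [hm₁]⟩
  have hy₂ : [y₂, x] <:+ x :: (m ++ [x]) := ⟨x :: m₂, by simp [hm₂]⟩
  suffices hx : ∀ α γ, [α, x] <:+ p ++ [x] → [x, γ] <+: x :: s → OpenAt E Z α x γ by
    simpa using hpx.append_tail hxs hx
  intro α γ hα hγ
  have hαx : [α, x, y₁] <:+: p ++ x :: (m ++ x :: s) := by
    simpa [hm₁] using List.infix_append_tail_of_suffix_of_prefix hα
      (show [x, y₁] <+: x :: (m ++ x :: s) from ⟨m₁ ++ x :: s, by simp [hm₁]⟩)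
  have hxγ : [y₂, x, γ] <:+: p ++ x :: (m ++ x :: s) := by
    simpa [hm₂] using List.infix_append_tail_of_suffix_of_prefix
      (show [y₂, x] <:+ p ++ x :: m ++ [x] from ⟨p ++ x :: m₂, by simp [hm₂]⟩) hγ
  refine (h.1.2 α x y₁ hαx).splice (h.1.2 y₂ x γ hxγ) (hloop.1.rel_of_infix hy₁.isInfix)
    (hloop.1.rel_of_infix hy₂.isInfix) fun hxy₁ hxy₂ => ?_
  rw [hm₁] at hloop hy₂
  exact hloop.exists_descendant_of_rel hE hxy₁ hy₂ hxy₂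

theorem DConnected.of_openWalkFrom (hE : AcyclicRel E) {u v : V} {l : List V}
    (h : OpenWalkFrom E Z u v l) (huv : u ≠ v) : DConnected E Z u v := by
  induction hn : l.length using Nat.strong_induction_on generalizing l with
  | _ n ih =>
  by_cases hl : l.Nodup
  · refine ⟨l, ⟨⟨h.1.1, hl⟩, h.2.1, h.2.2, ?_⟩, dConnPath_of_openWalk h.1⟩
    obtain ⟨w, rfl⟩ := List.head?_eq_some_iff.mp h.2.1
    rcases w with _ | ⟨w, t⟩
    · exact (huv (by simpa using h.2.2)).elim
    · simp
  · obtain ⟨p, x, m, s, rfl⟩ := List.exists_eq_append_cons_append_cons_of_not_nodup hl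
    exact ih _ (by simp at hn ⊢; omega) (h.shortcut hE) rfl

theorem UnblockedAnc.exists_dirWalkFrom {w u : V} (h : UnblockedAnc E Z w u) :
    ∃ l, DirWalkFrom (UnblockedEdge E Z) w u l := by
  rcases h with rfl | ⟨l, hl, hw, hu, hZ⟩
  · exact ⟨[w], .singleton w, rfl, rfl⟩
  · refine ⟨l, List.isChain_iff_forall_rel_of_append_cons_cons.mpr fun a b l₁ l₂ hl' => ?_, hw, hu⟩
    exact ⟨List.isChain_iff_forall_rel_of_append_cons_cons.mp hl hl', hZ a (by simp [hl'])⟩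

theorem exists_dirWalkFrom_of_reflTransGen {r : V → V → Prop} {a b : V}
    (h : Relation.ReflTransGen r a b) : ∃ l, DirWalkFrom r a b l := by
  obtain ⟨l, hl, hb⟩ := List.exists_isChain_cons_of_relationReflTransGen h
  exact ⟨a :: l, hl, rfl, by simp [← hb, List.getLast?_eq_some_getLast]⟩

end Walks

theorem exists_reflTransGen_of_eval_ne {V X : Type} {pa : V → List V}
    (hwf : WellFounded fun a b => a ∈ pa b) {g : V → X → List X → X} {f : (V → X) → V → X}
    (hf : ∀ (U : V → X) (w : V), f U w = g w (U w) ((pa w).map (f U))) {U U' : V → X} {v : V}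
    (hv : f U v ≠ f U' v) :
    ∃ a, U a ≠ U' a ∧ Relation.ReflTransGen (fun x y => x ∈ pa y ∧ f U x ≠ f U' x) a v := by
  induction v using hwf.induction with
  | _ v ih =>
  by_cases hU : U v = U' v
  · obtain ⟨p, hp, hfp⟩ : ∃ p ∈ pa v, f U p ≠ f U' p := by
      by_contra! hcon
      exact hv (by rw [hf U v, hf U' v, hU, List.map_congr_left hcon])
    obtain ⟨a, ha, hap⟩ := ih p hp hfp
    exact ⟨a, ha, hap.tail ⟨hp, hfp⟩⟩
  · exact ⟨v, hU, .refl⟩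

theorem short_sequence_dConnected_general {V X : Type} [Fintype V]
    (pa : V → List V) (hacyc : AcyclicRel (fun a b => a ∈ pa b))
    (Z : Set V) (AZ : V → X)
    (g : V → X → List X → X) (f : (V → X) → V → X)
    (hf : ∀ (U : V → X) (w : V), f U w = g w (U w) ((pa w).map (f U)))
    (u v : V) (hne : v ≠ u)
    (U0 U1 U2 : V → X)
    (h0 : ∀ z ∈ Z, f U0 z = AZ z) (h2 : ∀ z ∈ Z, f U2 z = AZ z)
    (h01 : ∀ a, U0 a ≠ U1 a → UnblockedAnc (fun a b => a ∈ pa b) Z a u)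
    (h12 : ∀ a', U1 a' ≠ U2 a' →
      ∃ z ∈ Z, UnblockedAnc (fun a b => a ∈ pa b) Z a' z ∧
        ∃ a, UnblockedAnc (fun a b => a ∈ pa b) Z a z ∧ U0 a ≠ U1 a)
    (hv : f U0 v ≠ f U2 v) :
    DConnected (fun a b => a ∈ pa b) Z u v := by
  have hZ : ∀ x, f U0 x ≠ f U2 x → x ∉ Z := fun x hx hxZ => hx ((h0 x hxZ).trans (h2 x hxZ).symm)
  obtain ⟨a, ha, hav⟩ := exists_reflTransGen_of_eval_ne hacyc.wellFounded hf hv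
  obtain ⟨dav, hdav⟩ := exists_dirWalkFrom_of_reflTransGen
    (Relation.ReflTransGen.mono (p := UnblockedEdge _ Z) (fun x _ hx => ⟨hx.1, hZ x hx.2⟩) _ _ hav)
  by_cases h01a : U0 a = U1 a
  · obtain ⟨z, hz, haz, b, hbz, hb⟩ := h12 a fun h => ha (h01a.trans h)
    obtain ⟨dbu, hdbu⟩ := (h01 b hb).exists_dirWalkFrom
    obtain ⟨dbz, hdbz⟩ := hbz.exists_dirWalkFrom
    obtain ⟨daz, hdaz⟩ := haz.exists_dirWalkFrom
    exact .of_openWalkFrom hacyc (.reverse_append_tail_of_dirWalkFrom hacyc hdbu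
      ((OpenWalkFrom.of_collider hacyc hdbz hdaz hz).append_tail_of_dirWalkFrom hacyc hdav))
      hne.symm
  · obtain ⟨dau, hdau⟩ := (h01 a h01a).exists_dirWalkFrom
    exact .of_openWalkFrom hacyc
      (.reverse_append_tail_of_dirWalkFrom hacyc hdau (.of_dirWalkFrom hacyc hdav)) hne.symm

/-- If a three-step sequence of exogenous assignments satisfying the semantic
separation conditions changes the value of `v`, then `u` and `v` are
d-connected given `Z`. -/
theorem short_sequence_dConnected {V X : Type} [Fintype V]
    (pa : V → List V) (hacyc : AcyclicRel (fun a b => a ∈ pa b))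
    (Z : Set V) (AZ : V → X)
    (g : V → X → List X → X) (f : (V → X) → V → X)
    (hf : ∀ (U : V → X) (w : V), f U w = g w (U w) ((pa w).map (f U)))
    (u v : V) (hvZ : v ∉ Z) (hne : v ≠ u)
    (U0 U1 U2 : V → X)
    (h0 : ∀ z ∈ Z, f U0 z = AZ z) (h2 : ∀ z ∈ Z, f U2 z = AZ z)
    (h01 : ∀ a, U0 a ≠ U1 a → UnblockedAnc (fun a b => a ∈ pa b) Z a u)
    (h12 : ∀ a', U1 a' ≠ U2 a' →
      ∃ z ∈ Z, UnblockedAnc (fun a b => a ∈ pa b) Z a' z ∧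
        ∃ a, UnblockedAnc (fun a b => a ∈ pa b) Z a z ∧ U0 a ≠ U1 a)
    (hv : f U0 v ≠ f U2 v) :
    DConnected (fun a b => a ∈ pa b) Z u v :=
  short_sequence_dConnected_general pa hacyc Z AZ g f hf u v hne U0 U1 U2 h0 h2 h01 h12 hv
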